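/- arXiv:1801.00038 — 6 statements merged into one kernel-verified Lean document; each statement's English description precedes it below -/
import Mathlib

section
/- Let K be a positive integer, let P₀ be a set of probability density functions on ℝ^K, and let f₁ be a probability density function on ℝ^K. Then the mixture family F(P₀, f₁) is identifiable (for all a, b ∈ (0,1) and all h₀, g₀ ∈ P₀, a·f₁ + (1−a)·h₀ = b·f₁ + (1−b)·g₀ implies a = b and h₀ = g₀) if and only if F(P₀, f₁) ∩ P₀ = ∅. -/
open MeasureTheory

/-- A probability density function on ℝ^K. -/
def IsPdf {K : ℕ} (f : (Fin K → ℝ) → ℝ) : Prop :=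
  Measurable f ∧ (∀ x, 0 ≤ f x) ∧ ∫ x, f x = 1

/-- The mixture family F(P₀, f₁). -/
def MixFam {K : ℕ} (P0 : Set ((Fin K → ℝ) → ℝ)) (f1 : (Fin K → ℝ) → ℝ) :
    Set ((Fin K → ℝ) → ℝ) :=
  {f | ∃ α ∈ Set.Ioo (0:ℝ) 1, ∃ f0 ∈ P0, f = fun x => α * f1 x + (1 - α) * f0 x}

/-!
If `g = α f₁ + (1-α) f₀` lies in `P₀`, then `½ f₁ + ½ g = ((1+α)/2) f₁ + ((1-α)/2) f₀` exhibits one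
member of the family with two different weights. Conversely, if `a f₁ + (1-a) h₀ = b f₁ + (1-b) g₀`
with `a < b`, solving for `h₀` writes it as the mixture of `f₁` and `g₀` with weight `(b-a)/(1-a)`,
so `h₀ ∈ F(P₀, f₁) ∩ P₀`; once `a = b`, the factor `1 - a ≠ 0` cancels.
-/

section Mixture

variable {X : Type*}

def mixture (a : ℝ) (f g : X → ℝ) : X → ℝ := fun x => a * f x + (1 - a) * g x

theorem mixture_mixture (a c : ℝ) (f g : X → ℝ) :
    mixture a f (mixture c f g) = mixture (a + (1 - a) * c) f g := by
  funext x
  simp only [mixture]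
  ring

theorem mixture_right_injective {a : ℝ} (ha : a ≠ 1) (f : X → ℝ) :
    Function.Injective (mixture a f) := by
  intro g h hgh
  funext x
  have hx := congrFun hgh x
  simp only [mixture, add_right_inj] at hx
  exact mul_left_cancel₀ (sub_ne_zero.2 ha.symm) hx

theorem eq_mixture_of_mixture_eq {a b : ℝ} (ha : a ≠ 1) {f g h : X → ℝ}
    (hmix : mixture a f h = mixture b f g) : h = mixture ((b - a) / (1 - a)) f g := by
  have h1a : 1 - a ≠ 0 := sub_ne_zero.2 ha.symm
  funext x
  have hx := congrFun hmix x
  simp only [mixture] at hx ⊢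
  field_simp
  linarith

theorem div_one_sub_mem_Ioo {a b : ℝ} (hab : a < b) (hb : b < 1) :
    (b - a) / (1 - a) ∈ Set.Ioo (0 : ℝ) 1 :=
  ⟨div_pos (by linarith) (by linarith), (div_lt_one (by linarith)).2 (by linarith)⟩

end Mixture

theorem mixture_mem_mixFam {K : ℕ} {P0 : Set ((Fin K → ℝ) → ℝ)} (f1 : (Fin K → ℝ) → ℝ)
    {α : ℝ} (hα : α ∈ Set.Ioo (0 : ℝ) 1) {f0 : (Fin K → ℝ) → ℝ} (hf0 : f0 ∈ P0) :
    mixture α f1 f0 ∈ MixFam P0 f1 :=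
  ⟨α, hα, f0, hf0, rfl⟩

theorem mem_mixFam_of_mixture_eq {K : ℕ} {P0 : Set ((Fin K → ℝ) → ℝ)}
    {f1 h0 g0 : (Fin K → ℝ) → ℝ} {a b : ℝ} (hab : a < b) (hb : b < 1) (hg0 : g0 ∈ P0)
    (hmix : mixture a f1 h0 = mixture b f1 g0) : h0 ∈ MixFam P0 f1 := by
  rw [eq_mixture_of_mixture_eq (by linarith) hmix]
  exact mixture_mem_mixFam f1 (div_one_sub_mem_Ioo hab hb) hg0

theorem stmt1_general (K : ℕ) (P0 : Set ((Fin K → ℝ) → ℝ))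
    (f1 : (Fin K → ℝ) → ℝ) :
    (∀ a ∈ Set.Ioo (0:ℝ) 1, ∀ b ∈ Set.Ioo (0:ℝ) 1, ∀ h0 ∈ P0, ∀ g0 ∈ P0,
        (fun x => a * f1 x + (1 - a) * h0 x) = (fun x => b * f1 x + (1 - b) * g0 x) →
        a = b ∧ h0 = g0) ↔
    MixFam P0 f1 ∩ P0 = ∅ := by
  rw [Set.eq_empty_iff_forall_notMem]
  constructor
  · rintro hid _ ⟨⟨α, ⟨hα0, hα1⟩, f0, hf0, rfl⟩, hg⟩
    have hweight : 1 / 2 + (1 - 1 / 2) * α ∈ Set.Ioo (0 : ℝ) 1 := ⟨by linarith, by linarith⟩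
    have := (hid _ hweight (1 / 2) (by norm_num) f0 hf0 _ hg
      (mixture_mixture (1 / 2) α f1 f0).symm).1
    linarith
  · intro hempty a ha b hb h0 hh0 g0 hg0 hmix
    obtain rfl : a = b := by
      by_contra hne
      rcases lt_or_gt_of_ne hne with hab | hab
      · exact hempty h0 ⟨mem_mixFam_of_mixture_eq hab hb.2 hg0 hmix, hh0⟩
      · exact hempty g0 ⟨mem_mixFam_of_mixture_eq hab ha.2 hh0 hmix.symm, hg0⟩
    exact ⟨rfl, mixture_right_injective ha.2.ne f1 hmix⟩

theorem stmt1 (K : ℕ) (hK : 0 < K) (P0 : Set ((Fin K → ℝ) → ℝ))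
    (f1 : (Fin K → ℝ) → ℝ) (hP0 : ∀ f ∈ P0, IsPdf f) (hf1 : IsPdf f1) :
    (∀ a ∈ Set.Ioo (0:ℝ) 1, ∀ b ∈ Set.Ioo (0:ℝ) 1, ∀ h0 ∈ P0, ∀ g0 ∈ P0,
        (fun x => a * f1 x + (1 - a) * h0 x) = (fun x => b * f1 x + (1 - b) * g0 x) →
        a = b ∧ h0 = g0) ↔
    MixFam P0 f1 ∩ P0 = ∅ :=
  stmt1_general K P0 f1
end

section
/- Let K be a positive integer, let P₀ be a set of probability density functions on ℝ^K, let f₁ be a probability density function on ℝ^K, and let S be a set. Suppose that for every pair f₀, g₀ ∈ P₀ there exists an ℝ-linear map Ψ from the real linear span of {f₀, g₀, f₁} (a subspace of the space of functions ℝ^K → ℝ) to the space of functions S → ℂ, and a sequence (tₙ) in S such that Ψ(f₁)(tₙ) ≠ 0 for all n, lim_{n→∞} Ψ(f₀)(tₙ)/Ψ(f₁)(tₙ) = 0, and there is no negative real number l with lim_{n→∞} Ψ(g₀)(tₙ)/Ψ(f₁)(tₙ) = l. Then the mixture family F(P₀, f₁) is identifiable: for all a, b ∈ (0,1) and all h₀,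 g₀ ∈ P₀, a·f₁ + (1−a)·h₀ = b·f₁ + (1−b)·g₀ implies a = b and h₀ = g₀. -/
open MeasureTheory Filter

private lemma aux_le {K : ℕ} {S : Type*} (h0 g0 f1 : (Fin K → ℝ) → ℝ)
    (Ψ : (Submodule.span ℝ ({h0, g0, f1} : Set ((Fin K → ℝ) → ℝ))) →ₗ[ℝ] (S → ℂ))
    (t : ℕ → S)
    (hne : ∀ n, Ψ ⟨f1, Submodule.subset_span (by simp)⟩ (t n) ≠ 0)
    (h0lim : Tendsto (fun n =>
        Ψ ⟨h0, Submodule.subset_span (by simp)⟩ (t n) /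
        Ψ ⟨f1, Submodule.subset_span (by simp)⟩ (t n)) atTop (nhds 0))
    (hneg : ¬ ∃ l : ℝ, l < 0 ∧ Tendsto (fun n =>
        Ψ ⟨g0, Submodule.subset_span (by simp)⟩ (t n) /
        Ψ ⟨f1, Submodule.subset_span (by simp)⟩ (t n)) atTop (nhds (l : ℂ)))
    (a b : ℝ) (hb : b < 1)
    (heq : ∀ x, a * f1 x + (1 - a) * h0 x = b * f1 x + (1 - b) * g0 x) :
    b ≤ a := by
  set eh : Submodule.span ℝ ({h0, g0, f1} : Set ((Fin K → ℝ) → ℝ)) :=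
    ⟨h0, Submodule.subset_span (by simp)⟩ with heh
  set eg : Submodule.span ℝ ({h0, g0, f1} : Set ((Fin K → ℝ) → ℝ)) :=
    ⟨g0, Submodule.subset_span (by simp)⟩ with heg
  set ef : Submodule.span ℝ ({h0, g0, f1} : Set ((Fin K → ℝ) → ℝ)) :=
    ⟨f1, Submodule.subset_span (by simp)⟩ with hef
  have hb0 : (1 : ℝ) - b ≠ 0 := by linarith
  set c : ℝ := (a - b) / (1 - b) with hc
  set d : ℝ := (1 - a) / (1 - b) with hd
  have hegeq : eg = c • ef + d • eh := by
    apply Subtype.ext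
    show g0 = c • f1 + d • h0
    funext x
    have := heq x
    simp only [Pi.add_apply, Pi.smul_apply, smul_eq_mul, hc, hd]
    field_simp
    ring_nf
    nlinarith [heq x]
  have hΨeq : ∀ n, Ψ eg (t n) / Ψ ef (t n)
      = (c : ℂ) + (d : ℂ) * (Ψ eh (t n) / Ψ ef (t n)) := by
    intro n
    rw [hegeq]
    simp only [map_add, _root_.map_smul, Pi.add_apply, Pi.smul_apply, Complex.real_smul,
      add_div, mul_div_assoc, div_self (hne n), mul_one]
  have hlim : Tendsto (fun n => Ψ eg (t n) / Ψ ef (t n)) atTop (nhds (c : ℂ)) := by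
    have : Tendsto (fun n => (c : ℂ) + (d : ℂ) * (Ψ eh (t n) / Ψ ef (t n))) atTop
        (nhds ((c : ℂ) + (d : ℂ) * 0)) :=
      tendsto_const_nhds.add (tendsto_const_nhds.mul h0lim)
    simpa [funext hΨeq] using this
  by_contra hab
  push_neg at hab
  exact hneg ⟨c, div_neg_of_neg_of_pos (by linarith) (by linarith), hlim⟩

theorem stmt2 (K : ℕ) (hK : 0 < K) (S : Type*) (P0 : Set ((Fin K → ℝ) → ℝ))
    (f1 : (Fin K → ℝ) → ℝ) (hP0 : ∀ f ∈ P0, IsPdf f) (hf1 : IsPdf f1)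
    (hΨ : ∀ f0 ∈ P0, ∀ g0 ∈ P0,
      ∃ Ψ : (Submodule.span ℝ ({f0, g0, f1} : Set ((Fin K → ℝ) → ℝ))) →ₗ[ℝ] (S → ℂ),
      ∃ t : ℕ → S,
        (∀ n, Ψ ⟨f1, Submodule.subset_span (by simp)⟩ (t n) ≠ 0) ∧
        Tendsto (fun n =>
            Ψ ⟨f0, Submodule.subset_span (by simp)⟩ (t n) /
            Ψ ⟨f1, Submodule.subset_span (by simp)⟩ (t n)) atTop (nhds 0) ∧
        ¬ ∃ l : ℝ, l < 0 ∧ Tendsto (fun n =>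
            Ψ ⟨g0, Submodule.subset_span (by simp)⟩ (t n) /
            Ψ ⟨f1, Submodule.subset_span (by simp)⟩ (t n)) atTop (nhds (l : ℂ))) :
    ∀ a ∈ Set.Ioo (0:ℝ) 1, ∀ b ∈ Set.Ioo (0:ℝ) 1, ∀ h0 ∈ P0, ∀ g0 ∈ P0,
      (fun x => a * f1 x + (1 - a) * h0 x) = (fun x => b * f1 x + (1 - b) * g0 x) →
      a = b ∧ h0 = g0 := by
  intro a ha b hb h0 hh0 g0 hg0 heq
  have heq' : ∀ x, a * f1 x + (1 - a) * h0 x = b * f1 x + (1 - b) * g0 x :=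
    fun x => congrFun heq x
  have h1 : b ≤ a := by
    obtain ⟨Ψ, t, hne, hlim, hneg⟩ := hΨ h0 hh0 g0 hg0
    exact aux_le h0 g0 f1 Ψ t hne hlim hneg a b hb.2 heq'
  have h2 : a ≤ b := by
    obtain ⟨Ψ, t, hne, hlim, hneg⟩ := hΨ g0 hg0 h0 hh0
    exact aux_le g0 h0 f1 Ψ t hne hlim hneg b a ha.2 (fun x => (heq' x).symm)
  have hab : a = b := le_antisymm h2 h1
  refine ⟨hab, funext fun x => ?_⟩
  have := heq' x
  rw [hab] at this
  have h1a : (1 : ℝ) - b ≠ 0 := by linarith [hb.2]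
  have : (1 - b) * h0 x = (1 - b) * g0 x := by linarith
  exact mul_left_cancel₀ h1a this
end

section
/- Let K be a positive integer and let A and B be K×K real symmetric matrices with A ≠ 0 and B ≠ 0. If A is positive semidefinite, or if −A is not positive semidefinite, then there exists a vector t ∈ ℝ^K such that tᵀBt ≠ 0 and tᵀAt > 0. -/
open Matrix

lemma quad_symm {K : ℕ} (M : Matrix (Fin K) (Fin K) ℝ) (hM : M.IsSymm)
    (x y : Fin K → ℝ) : x ⬝ᵥ M.mulVec y = y ⬝ᵥ M.mulVec x := by
  rw [Matrix.dotProduct_mulVec, ← Matrix.mulVec_transpose, hM.eq, dotProduct_comm]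

lemma quad_zero {K : ℕ} (M : Matrix (Fin K) (Fin K) ℝ) (hM : M.IsSymm)
    (h : ∀ t : Fin K → ℝ, t ⬝ᵥ M.mulVec t = 0) : M = 0 := by
  ext i j
  have hji : M j i = M i j := hM.apply i j
  have h1 := h (Pi.single i 1)
  have h2 := h (Pi.single j 1)
  have h3 := h (Pi.single i 1 + Pi.single j 1)
  simp [Matrix.mulVec_add, dotProduct_add, add_dotProduct, Matrix.mulVec_single,
    dotProduct_single, single_dotProduct] at h1 h2 h3 ⊢
  linarith

theorem stmt7 (K : ℕ) (hK : 0 < K) (A B : Matrix (Fin K) (Fin K) ℝ)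
    (hA : A.IsSymm) (hB : B.IsSymm) (hA0 : A ≠ 0) (hB0 : B ≠ 0)
    (h : (∀ t : Fin K → ℝ, 0 ≤ t ⬝ᵥ A.mulVec t) ∨
         ¬ (∀ t : Fin K → ℝ, 0 ≤ t ⬝ᵥ (-A).mulVec t)) :
    ∃ t : Fin K → ℝ, t ⬝ᵥ B.mulVec t ≠ 0 ∧ 0 < t ⬝ᵥ A.mulVec t := by
  -- step 1: get t₀ with qA t₀ > 0
  obtain ⟨t₀, ht₀⟩ : ∃ t₀ : Fin K → ℝ, 0 < t₀ ⬝ᵥ A.mulVec t₀ := by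
    rcases h with h | h
    · by_contra hc
      push_neg at hc
      apply hA0
      apply quad_zero A hA
      intro t
      exact le_antisymm (hc t) (h t)
    · push_neg at h
      obtain ⟨t, ht⟩ := h
      refine ⟨t, ?_⟩
      simp [Matrix.neg_mulVec] at ht
      linarith
  -- step 2: get s with qB s ≠ 0
  obtain ⟨s, hs⟩ : ∃ s : Fin K → ℝ, s ⬝ᵥ B.mulVec s ≠ 0 := by
    by_contra hc
    push_neg at hc
    exact hB0 (quad_zero B hB hc)
  by_cases h0 : t₀ ⬝ᵥ B.mulVec t₀ ≠ 0
  · exact ⟨t₀, h0, ht₀⟩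
  push_neg at h0
  -- perturbation
  set a : ℝ := t₀ ⬝ᵥ A.mulVec t₀ with ha
  set b : ℝ := s ⬝ᵥ A.mulVec t₀ with hb
  set a' : ℝ := s ⬝ᵥ A.mulVec s with ha'
  set c : ℝ := s ⬝ᵥ B.mulVec t₀ with hc
  set d : ℝ := s ⬝ᵥ B.mulVec s with hd
  have expand : ∀ (M : Matrix (Fin K) (Fin K) ℝ), M.IsSymm → ∀ ε : ℝ,
      (t₀ + ε • s) ⬝ᵥ M.mulVec (t₀ + ε • s)
        = t₀ ⬝ᵥ M.mulVec t₀ + 2 * ε * (s ⬝ᵥ M.mulVec t₀) + ε^2 * (s ⬝ᵥ M.mulVec s) := by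
    intro M hM ε
    have hsy := quad_symm M hM t₀ s
    simp [Matrix.mulVec_add, Matrix.mulVec_smul, dotProduct_add, add_dotProduct,
      dotProduct_smul, smul_dotProduct, smul_eq_mul]
    ring_nf
    rw [hsy]
    ring
  set ε₀ : ℝ := min 1 (a / (2 * (|b| + |a'| + 1))) with hε₀
  have hε₀pos : 0 < ε₀ := by
    apply lt_min one_pos
    positivity
  have key : ∀ ε : ℝ, |ε| ≤ ε₀ → 0 < (t₀ + ε • s) ⬝ᵥ A.mulVec (t₀ + ε • s) := by
    intro ε hε
    rw [expand A hA ε]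
    have h1 : |ε| ≤ 1 := le_trans hε (min_le_left _ _)
    have h2 : |ε| ≤ a / (2 * (|b| + |a'| + 1)) := le_trans hε (min_le_right _ _)
    have h3 : |ε| * (2 * (|b| + |a'| + 1)) ≤ a := by
      rw [← le_div_iff₀ (by positivity)]
      exact h2
    have hb1 : -(|ε| * |b|) ≤ ε * b := by
      have := abs_le.mp (le_refl |ε * b|)
      rw [abs_mul] at *
      nlinarith [neg_abs_le (ε * b), abs_mul ε b]
    have h4 : ε^2 ≤ |ε| := by nlinarith [sq_abs ε, abs_nonneg ε]
    have hb2 : -(|ε| * |a'|) ≤ ε^2 * a' := by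
      have h5 := neg_abs_le (ε^2 * a')
      rw [abs_mul, abs_of_nonneg (sq_nonneg ε)] at h5
      nlinarith [abs_nonneg a']
    nlinarith [abs_nonneg ε, abs_nonneg b, abs_nonneg a']
  have keyB : ∀ ε : ℝ, (t₀ + ε • s) ⬝ᵥ B.mulVec (t₀ + ε • s) = ε * (2 * c + ε * d) := by
    intro ε
    rw [expand B hB ε, h0]
    ring
  by_cases hcase : 2 * c + ε₀ * d ≠ 0
  · refine ⟨t₀ + ε₀ • s, ?_, key ε₀ (by rw [abs_of_pos hε₀pos])⟩
    rw [keyB]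
    exact mul_ne_zero (ne_of_gt hε₀pos) hcase
  · push_neg at hcase
    refine ⟨t₀ + (-ε₀) • s, ?_, key (-ε₀) (by rw [abs_neg, abs_of_pos hε₀pos])⟩
    rw [keyB]
    have : 2 * c + (-ε₀) * d = -2 * ε₀ * d := by linarith
    rw [this]
    apply mul_ne_zero (by linarith)
    intro hz
    rcases mul_eq_zero.mp hz with h' | h'
    · rcases mul_eq_zero.mp h' with h'' | h'' <;> [norm_num at h''; linarith]
    · exact hs h'
end

section
/- Let (μ, ω, λ) and (μ̃, ω̃, λ̃) be univariate skew normal parameters (ω, ω̃ > 0), with Δ = ω·λ/√(1+λ²), Γ = ω²/(1+λ²), and analogously Δ̃, Γ̃. Let CF and C̃F denote the corresponding skew normal characteristic functions CF(t) = exp(iμt − t²ω²/2)·(1 + i·ℑ(Δt)) and C̃F(t) = exp(iμ̃t − t²ω̃²/2)·(1 + i·ℑ(Δ̃t)). If Γ − Γ̃ > 0, then for every t ∈ ℝ with t ≠ 0, lim_{c→∞} CF(ct)/C̃F(ct) = 0. -/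
open Filter

noncomputable section

/-- ℑ(x) = ∫₀ˣ √(2/π)·exp(u²/2) du. -/
def ImInt (x : ℝ) : ℝ := ∫ u in (0:ℝ)..x, Real.sqrt (2 / Real.pi) * Real.exp (u ^ 2 / 2)

/-- The skew normal characteristic function of SN(μ, ω, λ),
with Δ = ω·λ/√(1+λ²). -/
def snCF (μ ω lam : ℝ) (t : ℝ) : ℂ :=
  Complex.exp (Complex.I * (μ : ℂ) * (t : ℂ) - ((t ^ 2 * ω ^ 2 / 2 : ℝ) : ℂ)) *
    (1 + Complex.I * ((ImInt (ω * lam / Real.sqrt (1 + lam ^ 2) * t) : ℝ) : ℂ))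

/-! Since `Δ² = ω² - Γ`, the estimates `|ℑ(x)| ≤ √(2/π) |x| e^{x²/2}` and
`x ℑ(x) ≥ √(2/π) (e^{x²/2} - 1)` pin `‖CF(s)‖` to `e^{-Γ s²/2}` up to factors linear
in `|s|`.
So `‖CF(s) / C̃F(s)‖` is at most a quadratic in `|s|` times `e^{-(Γ - Γ̃) s²/2}`, which vanishes
as `|s| → ∞`; the limit along `s = c t` follows since `c ↦ c t` is proper for `t ≠ 0`. -/

open Real Topology

lemma ImInt_neg (x : ℝ) : ImInt (-x) = -ImInt x := by
  have h := intervalIntegral.integral_comp_neg (a := 0) (b := -x)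
    (fun u => √(2 / π) * exp (u ^ 2 / 2))
  simp only [neg_sq, neg_zero, neg_neg] at h
  rw [ImInt, h, intervalIntegral.integral_symm, ImInt]

lemma abs_ImInt_le (x : ℝ) : |ImInt x| ≤ √(2 / π) * exp (x ^ 2 / 2) * |x| := by
  have h := intervalIntegral.norm_integral_le_of_norm_le_const (a := 0) (b := x)
    (C := √(2 / π) * exp (x ^ 2 / 2)) (f := fun u => √(2 / π) * exp (u ^ 2 / 2)) ?_
  · simpa only [ImInt, Real.norm_eq_abs, sub_zero] using h
  intro u hu
  have hu : |u| ≤ |x| := by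
    rcases Set.mem_uIoc.mp hu with hu | hu <;> rw [abs_le] <;> constructor <;>
      cases abs_cases x <;> linarith
  rw [Real.norm_of_nonneg (by positivity)]
  exact mul_le_mul_of_nonneg_left (exp_le_exp.mpr (by nlinarith [sq_le_sq.mpr hu]))
    (sqrt_nonneg _)

lemma integral_mul_exp_sq_div_two (x : ℝ) :
    ∫ u in (0:ℝ)..x, u * exp (u ^ 2 / 2) = exp (x ^ 2 / 2) - 1 := by
  have hderiv : ∀ u ∈ Set.uIcc (0:ℝ) x,
      HasDerivAt (fun v : ℝ => exp (v ^ 2 / 2)) (u * exp (u ^ 2 / 2)) u := by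
    intro u _
    have h := ((hasDerivAt_pow 2 u).div_const 2).exp
    convert h using 1
    push_cast
    ring
  have hint : IntervalIntegrable (fun u => u * exp (u ^ 2 / 2)) MeasureTheory.volume 0 x := by
    apply Continuous.intervalIntegrable; fun_prop
  rw [intervalIntegral.integral_eq_sub_of_hasDerivAt hderiv hint]
  simp

lemma exp_sq_div_two_sub_one_le_mul_ImInt_of_nonneg {x : ℝ} (hx : 0 ≤ x) :
    √(2 / π) * (exp (x ^ 2 / 2) - 1) ≤ x * ImInt x := by
  have hcmp :
      ∫ u in (0:ℝ)..x, u * exp (u ^ 2 / 2) ≤ ∫ u in (0:ℝ)..x, x * exp (u ^ 2 / 2) := by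
    refine intervalIntegral.integral_mono_on hx ?_ ?_ fun u hu => ?_
    · apply Continuous.intervalIntegrable; fun_prop
    · apply Continuous.intervalIntegrable; fun_prop
    · exact mul_le_mul_of_nonneg_right hu.2 (exp_pos _).le
  rw [integral_mul_exp_sq_div_two, intervalIntegral.integral_const_mul] at hcmp
  rw [ImInt, intervalIntegral.integral_const_mul]
  nlinarith [sqrt_nonneg (2 / π)]

lemma exp_sq_div_two_sub_one_le_mul_ImInt (x : ℝ) :
    √(2 / π) * (exp (x ^ 2 / 2) - 1) ≤ x * ImInt x := by
  rcases le_total 0 x with hx | hx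
  · exact exp_sq_div_two_sub_one_le_mul_ImInt_of_nonneg hx
  · simpa only [neg_sq, ImInt_neg, neg_mul_neg] using
      exp_sq_div_two_sub_one_le_mul_ImInt_of_nonneg (neg_nonneg.mpr hx)

lemma sqrt_one_add_ImInt_sq_le (x : ℝ) :
    √(1 + ImInt x ^ 2) ≤ (1 + √(2 / π) * |x|) * exp (x ^ 2 / 2) := by
  have h1 : 1 ≤ exp (x ^ 2 / 2) := one_le_exp (by positivity)
  calc √(1 + ImInt x ^ 2) ≤ 1 + |ImInt x| := by
        rw [sqrt_le_left (by positivity)]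
        nlinarith [sq_abs (ImInt x), abs_nonneg (ImInt x)]
    _ ≤ exp (x ^ 2 / 2) + √(2 / π) * exp (x ^ 2 / 2) * |x| := add_le_add h1 (abs_ImInt_le x)
    _ = (1 + √(2 / π) * |x|) * exp (x ^ 2 / 2) := by ring

lemma sqrt_two_div_pi_le_one : √(2 / π) ≤ 1 :=
  sqrt_le_one.mpr ((div_le_one pi_pos).mpr (by linarith [pi_gt_three]))

lemma exp_sq_div_two_le_sqrt_one_add_ImInt_sq (x : ℝ) :
    √(2 / π) * exp (x ^ 2 / 2) ≤ (1 + |x|) * √(1 + ImInt x ^ 2) := by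
  have hone : 1 ≤ √(1 + ImInt x ^ 2) := one_le_sqrt.mpr (by nlinarith)
  have habs : |ImInt x| ≤ √(1 + ImInt x ^ 2) := by
    rw [← sqrt_sq_eq_abs]; exact sqrt_le_sqrt (by linarith)
  have hmul : x * ImInt x ≤ |x| * |ImInt x| := by rw [← abs_mul]; exact le_abs_self _
  nlinarith [exp_sq_div_two_sub_one_le_mul_ImInt x, sqrt_two_div_pi_le_one, abs_nonneg x,
    mul_le_mul_of_nonneg_left habs (abs_nonneg x)]

def snDelta (ω lam : ℝ) : ℝ := ω * lam / √(1 + lam ^ 2)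

def snGamma (ω lam : ℝ) : ℝ := ω ^ 2 / (1 + lam ^ 2)

lemma snDelta_sq (ω lam : ℝ) : snDelta ω lam ^ 2 = ω ^ 2 - snGamma ω lam := by
  have h : 0 < 1 + lam ^ 2 := by positivity
  rw [snDelta, snGamma, div_pow, sq_sqrt h.le]
  field_simp
  ring

lemma norm_snCF (μ ω lam t : ℝ) :
    ‖snCF μ ω lam t‖ =
      exp (-(t ^ 2 * ω ^ 2 / 2)) * √(1 + ImInt (snDelta ω lam * t) ^ 2) := by
  have hexp : Complex.I * μ * t - ((t ^ 2 * ω ^ 2 / 2 : ℝ) : ℂ)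
      = ((-(t ^ 2 * ω ^ 2 / 2) : ℝ) : ℂ) + ((μ * t : ℝ) : ℂ) * Complex.I := by
    push_cast; ring
  have hfac : 1 + Complex.I * ((ImInt (snDelta ω lam * t) : ℝ) : ℂ)
      = ((1 : ℝ) : ℂ) + ((ImInt (snDelta ω lam * t) : ℝ) : ℂ) * Complex.I := by
    push_cast; ring
  rw [snCF, ← snDelta, norm_mul, Complex.norm_exp, hexp, hfac, Complex.norm_add_mul_I]
  simp only [Complex.add_re, Complex.ofReal_re, Complex.re_ofReal_mul, Complex.I_re, mul_zero,
    add_zero, one_pow]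

lemma norm_snCF_le (μ ω lam t : ℝ) :
    ‖snCF μ ω lam t‖ ≤
      (1 + √(2 / π) * |snDelta ω lam| * |t|) * exp (-(snGamma ω lam * t ^ 2 / 2)) := by
  have h := mul_le_mul_of_nonneg_left (sqrt_one_add_ImInt_sq_le (snDelta ω lam * t))
    (exp_pos (-(t ^ 2 * ω ^ 2 / 2))).le
  calc ‖snCF μ ω lam t‖ ≤ _ := (norm_snCF μ ω lam t).trans_le h
    _ = (1 + √(2 / π) * |snDelta ω lam| * |t|) *
          (exp (-(t ^ 2 * ω ^ 2 / 2)) * exp ((snDelta ω lam * t) ^ 2 / 2)) := by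
      rw [abs_mul]; ring
    _ = _ := by
      rw [← exp_add, mul_pow, snDelta_sq]
      ring_nf

lemma exp_le_norm_snCF (μ ω lam t : ℝ) :
    √(2 / π) * exp (-(snGamma ω lam * t ^ 2 / 2)) ≤
      (1 + |snDelta ω lam| * |t|) * ‖snCF μ ω lam t‖ := by
  have h := mul_le_mul_of_nonneg_left (exp_sq_div_two_le_sqrt_one_add_ImInt_sq (snDelta ω lam * t))
    (exp_pos (-(t ^ 2 * ω ^ 2 / 2))).le
  calc
    _ = exp (-(t ^ 2 * ω ^ 2 / 2)) * (√(2 / π) * exp ((snDelta ω lam * t) ^ 2 / 2)) := by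
      rw [mul_left_comm, ← exp_add, mul_pow, snDelta_sq]
      ring_nf
    _ ≤ _ := h
    _ = _ := by rw [norm_snCF, abs_mul]; ring

lemma norm_snCF_div_le (μ ω lam μ' ω' lam' t : ℝ) :
    ‖snCF μ ω lam t / snCF μ' ω' lam' t‖ ≤
      (1 + √(2 / π) * |snDelta ω lam| * |t|) * (1 + |snDelta ω' lam'| * |t|) *
        exp (-((snGamma ω lam - snGamma ω' lam') / 2) * t ^ 2) / √(2 / π) := by
  have hq : 0 < √(2 / π) := sqrt_pos.mpr (by positivity)
  have hden := exp_le_norm_snCF μ' ω' lam' t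
  have hden_pos : 0 < ‖snCF μ' ω' lam' t‖ :=
    pos_of_mul_pos_right ((mul_pos hq (exp_pos _)).trans_le hden) (by positivity)
  rw [norm_div, div_le_div_iff₀ hden_pos hq]
  calc ‖snCF μ ω lam t‖ * √(2 / π)
      ≤ (1 + √(2 / π) * |snDelta ω lam| * |t|) * exp (-(snGamma ω lam * t ^ 2 / 2)) *
          √(2 / π) :=
        mul_le_mul_of_nonneg_right (norm_snCF_le μ ω lam t) hq.le
    _ = (1 + √(2 / π) * |snDelta ω lam| * |t|) *
          exp (-((snGamma ω lam - snGamma ω' lam') / 2) * t ^ 2) *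
          (√(2 / π) * exp (-(snGamma ω' lam' * t ^ 2 / 2))) := by
        rw [show -(snGamma ω lam * t ^ 2 / 2) =
          -((snGamma ω lam - snGamma ω' lam') / 2) * t ^ 2 + -(snGamma ω' lam' * t ^ 2 / 2) by ring,
          exp_add]
        ring
    _ ≤ (1 + √(2 / π) * |snDelta ω lam| * |t|) *
          exp (-((snGamma ω lam - snGamma ω' lam') / 2) * t ^ 2) *
          ((1 + |snDelta ω' lam'| * |t|) * ‖snCF μ' ω' lam' t‖) :=
        mul_le_mul_of_nonneg_left hden (by positivity)
    _ = _ := by ring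

lemma tendsto_one_add_mul_abs_mul_exp_neg_mul_sq_cocompact (a b : ℝ) {ε : ℝ} (hε : 0 < ε) :
    Tendsto (fun s : ℝ => (1 + a * |s|) * (1 + b * |s|) * exp (-ε * s ^ 2))
      (cocompact ℝ) (𝓝 0) := by
  have hpow (k : ℕ) :
      Tendsto (fun s : ℝ => |s| ^ k * exp (-ε * s ^ 2)) (cocompact ℝ) (𝓝 0) := by
    simpa only [rpow_natCast] using tendsto_rpow_abs_mul_exp_neg_mul_sq_cocompact hε k
  have h := ((hpow 0).add ((hpow 1).const_mul (a + b))).add ((hpow 2).const_mul (a * b))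
  simp only [mul_zero, add_zero] at h
  convert h using 2 with s
  ring

lemma tendsto_snCF_div_cocompact (μ ω lam μ' ω' lam' : ℝ)
    (hΓ : snGamma ω' lam' < snGamma ω lam) :
    Tendsto (fun t => snCF μ ω lam t / snCF μ' ω' lam' t) (cocompact ℝ) (𝓝 0) := by
  have hε : 0 < (snGamma ω lam - snGamma ω' lam') / 2 := by linarith
  refine squeeze_zero_norm (norm_snCF_div_le μ ω lam μ' ω' lam') ?_
  simpa only [zero_div] using
    (tendsto_one_add_mul_abs_mul_exp_neg_mul_sq_cocompact _ _ hε).div_const (√(2 / π))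

theorem stmt9_general (μ ω lam μ' ω' lam' : ℝ)
    (hΓ : 0 < ω ^ 2 / (1 + lam ^ 2) - ω' ^ 2 / (1 + lam' ^ 2)) :
    ∀ t : ℝ, t ≠ 0 →
      Tendsto (fun c : ℝ => snCF μ ω lam (c * t) / snCF μ' ω' lam' (c * t))
        atTop (nhds 0) := by
  intro t ht
  have hscale : Tendsto (fun c : ℝ => c * t) atTop (cocompact ℝ) :=
    (tendsto_cocompact_mul_right₀ ht).mono_left atTop_le_cocompact
  exact (tendsto_snCF_div_cocompact μ ω lam μ' ω' lam' (sub_pos.mp hΓ)).comp hscale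

theorem stmt9 (μ ω lam μ' ω' lam' : ℝ) (hω : 0 < ω) (hω' : 0 < ω')
    (hΓ : 0 < ω ^ 2 / (1 + lam ^ 2) - ω' ^ 2 / (1 + lam' ^ 2)) :
    ∀ t : ℝ, t ≠ 0 →
      Tendsto (fun c : ℝ => snCF μ ω lam (c * t) / snCF μ' ω' lam' (c * t))
        atTop (nhds 0) :=
  stmt9_general μ ω lam μ' ω' lam' hΓ
end
end

section
/- Let ℑ(x) = ∫₀ˣ √(2/π)·exp(u²/2) du. For every real x ≠ 0, lim_{c→∞} c·ℑ(c·x) / exp(c²x²/2) = √(2/π) · (1/x). -/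
/-!
Writing `ℑ(y) = √(2/π) e^{y²/2} S(y)` with the odd function `S(t) = ∫₀ᵗ e^{(u² - t²)/2} du`,
the quotient equals `√(2/π) · (1/x) · (c x) S(c x)`, so it suffices that `t S(t) → 1` as
`|t| → ∞`. For `t > 0` this follows by squeezing: the exponent `(u² - t²)/2` lies above its
tangent `t (u - t)` at `u = t`, giving `t S(t) ≥ 1 - e^{-t²}`, and below the chord
`(t - 1)(u - t)` on `[t - 2, t]`, while on `[0, t - 2]` the integrand is at most `e^{2 - t}`,
giving `t S(t) ≤ e² t² e^{-t} + t / (t - 1)`.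
-/

open Filter

noncomputable section

open Real Topology

theorem integral_exp_mul_sub {c : ℝ} (hc : c ≠ 0) (a b : ℝ) :
    ∫ u in a..b, exp (c * (u - b)) = (1 - exp (c * (a - b))) / c := by
  simp only [mul_sub]
  rw [intervalIntegral.integral_comp_mul_sub (fun u => exp u) hc, integral_exp, sub_self, exp_zero,
    smul_eq_mul, inv_mul_eq_div]

/-- `√2 · D(t / √2)` for Dawson's function `D`. -/
def scaledDawson (t : ℝ) : ℝ := ∫ u in (0:ℝ)..t, exp ((u ^ 2 - t ^ 2) / 2)

theorem exp_mul_scaledDawson (t : ℝ) :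
    exp (t ^ 2 / 2) * scaledDawson t = ∫ u in (0:ℝ)..t, exp (u ^ 2 / 2) := by
  rw [scaledDawson, ← intervalIntegral.integral_const_mul]
  congr 1 with u
  rw [← exp_add]
  ring_nf

theorem scaledDawson_neg (t : ℝ) : scaledDawson (-t) = -scaledDawson t := by
  have h := intervalIntegral.integral_comp_neg (a := 0) (b := t)
    fun u => exp ((u ^ 2 - t ^ 2) / 2)
  simp only [neg_sq, neg_zero] at h
  rw [scaledDawson, scaledDawson, neg_sq, intervalIntegral.integral_symm (-t) 0, ← h]

theorem one_sub_exp_neg_sq_div_le_scaledDawson {t : ℝ} (ht : 0 < t) :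
    (1 - exp (-t ^ 2)) / t ≤ scaledDawson t := by
  have h := integral_exp_mul_sub ht.ne' 0 t
  rw [show t * (0 - t) = -t ^ 2 by ring] at h
  rw [← h, scaledDawson]
  refine intervalIntegral.integral_mono_on ht.le
    (Continuous.intervalIntegrable (by fun_prop) _ _)
    (Continuous.intervalIntegrable (by fun_prop) _ _) fun u _ => exp_le_exp.mpr ?_
  nlinarith [sq_nonneg (u - t)]

theorem scaledDawson_le {t : ℝ} (ht : 2 ≤ t) :
    scaledDawson t ≤ t * exp (2 - t) + 1 / (t - 1) := by
  have hfar : ∫ u in (0:ℝ)..t - 2, exp ((u ^ 2 - t ^ 2) / 2) ≤ t * exp (2 - t) :=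
    calc ∫ u in (0:ℝ)..t - 2, exp ((u ^ 2 - t ^ 2) / 2)
        ≤ ∫ _ in (0:ℝ)..t - 2, exp (2 - t) := by
          refine intervalIntegral.integral_mono_on (by linarith)
            (Continuous.intervalIntegrable (by fun_prop) _ _)
            (Continuous.intervalIntegrable (by fun_prop) _ _) fun u hu => exp_le_exp.mpr ?_
          nlinarith [hu.1, hu.2]
      _ = (t - 2) * exp (2 - t) := by simp
      _ ≤ t * exp (2 - t) := by gcongr; linarith
  have hnear : ∫ u in t - 2..t, exp ((u ^ 2 - t ^ 2) / 2) ≤ 1 / (t - 1) :=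
    calc ∫ u in t - 2..t, exp ((u ^ 2 - t ^ 2) / 2)
        ≤ ∫ u in t - 2..t, exp ((t - 1) * (u - t)) := by
          refine intervalIntegral.integral_mono_on (by linarith)
            (Continuous.intervalIntegrable (by fun_prop) _ _)
            (Continuous.intervalIntegrable (by fun_prop) _ _) fun u hu => exp_le_exp.mpr ?_
          nlinarith [mul_nonneg (sub_nonneg.2 hu.2) (sub_nonneg.2 hu.1)]
      _ = (1 - exp ((t - 1) * (t - 2 - t))) / (t - 1) := integral_exp_mul_sub (by linarith) _ _
      _ ≤ 1 / (t - 1) := by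
          gcongr <;> linarith [exp_pos ((t - 1) * (t - 2 - t))]
  rw [scaledDawson, ← intervalIntegral.integral_add_adjacent_intervals (b := t - 2)
    (Continuous.intervalIntegrable (by fun_prop) _ _)
    (Continuous.intervalIntegrable (by fun_prop) _ _)]
  exact add_le_add hfar hnear

theorem tendsto_mul_scaledDawson_atTop : Tendsto (fun t => t * scaledDawson t) atTop (𝓝 1) := by
  have hlower : Tendsto (fun t : ℝ => 1 - exp (-t ^ 2)) atTop (𝓝 1) := by
    simpa using tendsto_const_nhds.sub
      (tendsto_exp_neg_atTop_nhds_zero.comp (tendsto_pow_atTop two_ne_zero))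
  have hupper : Tendsto (fun t : ℝ => exp 2 * (t ^ 2 * exp (-t)) + (1 + 1 / (t - 1)))
      atTop (𝓝 1) := by
    have hinv : Tendsto (fun t : ℝ => 1 / (t - 1)) atTop (𝓝 0) :=
      tendsto_const_nhds.div_atTop (tendsto_atTop_add_const_right _ _ tendsto_id)
    simpa using ((tendsto_pow_mul_exp_neg_atTop_nhds_zero 2).const_mul (exp 2)).add
      (hinv.const_add 1)
  refine tendsto_of_tendsto_of_tendsto_of_le_of_le' hlower hupper ?_ ?_
  · filter_upwards [eventually_gt_atTop 0] with t ht
    have := mul_le_mul_of_nonneg_left (one_sub_exp_neg_sq_div_le_scaledDawson ht) ht.le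
    rwa [mul_div_cancel₀ _ ht.ne'] at this
  · filter_upwards [eventually_ge_atTop 2] with t ht
    have hc : t - 1 ≠ 0 := by linarith
    calc t * scaledDawson t ≤ t * (t * exp (2 - t) + 1 / (t - 1)) := by
          gcongr; exact scaledDawson_le ht
      _ = exp 2 * (t ^ 2 * exp (-t)) + (1 + 1 / (t - 1)) := by
          rw [sub_eq_add_neg 2, exp_add]
          field_simp
          ring

theorem tendsto_mul_scaledDawson_atBot : Tendsto (fun t => t * scaledDawson t) atBot (𝓝 1) := by
  refine (tendsto_mul_scaledDawson_atTop.comp tendsto_neg_atBot_atTop).congr fun t => ?_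
  simp [scaledDawson_neg]

theorem tendsto_mul_scaledDawson_mul {x : ℝ} (hx : x ≠ 0) :
    Tendsto (fun c => c * x * scaledDawson (c * x)) atTop (𝓝 1) := by
  rcases hx.lt_or_gt with hneg | hpos
  · exact tendsto_mul_scaledDawson_atBot.comp (tendsto_id.atTop_mul_const_of_neg hneg)
  · exact tendsto_mul_scaledDawson_atTop.comp (tendsto_id.atTop_mul_const hpos)

theorem ImInt_eq (x : ℝ) : ImInt x = √(2 / π) * exp (x ^ 2 / 2) * scaledDawson x := by
  rw [ImInt, intervalIntegral.integral_const_mul, mul_assoc, exp_mul_scaledDawson]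

theorem stmt17 (x : ℝ) (hx : x ≠ 0) :
    Tendsto (fun c : ℝ => c * ImInt (c * x) / Real.exp (c ^ 2 * x ^ 2 / 2))
      atTop (nhds (Real.sqrt (2 / Real.pi) * (1 / x))) := by
  have h := (tendsto_mul_scaledDawson_mul hx).const_mul (√(2 / π) * (1 / x))
  rw [mul_one] at h
  refine h.congr fun c => ?_
  rw [ImInt_eq, mul_pow]
  field_simp
end
end

section
/- Let ℑ(x) = ∫₀ˣ √(2/π)·exp(u²/2) du. For every real x, limsup_{c→∞} (1 + ℑ(c·x)²) / exp(c²x²) < ∞. -/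
/-! On `[0, t]` the integrand `exp (u²/2)` is at most `exp (t²/2)`, which bounds the integral by
`t · exp (t²/2)`, and also at most `exp (t u / 2)`, which bounds it by `(2 / t) · exp (t²/2)`.
The two bounds cross at `t = √2`, so `|ℑ y| ≤ √(2/π) · √2 · exp (y²/2)`, and
`(1 + ℑ(c x)²) / exp (c² x²) ≤ 1 + 4 / π` for every `c`. -/

open Filter

noncomputable section

open Real

theorem intervalIntegral_zero_neg_of_even {f : ℝ → ℝ} (hf : ∀ u, f (-u) = f u) (t : ℝ) :
    ∫ u in (0:ℝ)..(-t), f u = -∫ u in (0:ℝ)..t, f u := by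
  rw [intervalIntegral.integral_symm, ← neg_zero, ← intervalIntegral.integral_comp_neg]
  simp only [hf, neg_zero]

theorem integral_exp_sq_half_le_mul {t : ℝ} (ht : 0 ≤ t) :
    ∫ u in (0:ℝ)..t, exp (u ^ 2 / 2) ≤ t * exp (t ^ 2 / 2) := by
  calc ∫ u in (0:ℝ)..t, exp (u ^ 2 / 2)
      ≤ ∫ _ in (0:ℝ)..t, exp (t ^ 2 / 2) := by
        refine intervalIntegral.integral_mono_on ht
          ((by fun_prop : Continuous _).intervalIntegrable _ _) intervalIntegrable_const ?_
        intro u hu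
        exact exp_le_exp.2 (by nlinarith [hu.1, hu.2])
    _ = t * exp (t ^ 2 / 2) := by simp

theorem integral_exp_sq_half_le_two_div_mul {t : ℝ} (ht : 0 < t) :
    ∫ u in (0:ℝ)..t, exp (u ^ 2 / 2) ≤ 2 / t * exp (t ^ 2 / 2) := by
  calc ∫ u in (0:ℝ)..t, exp (u ^ 2 / 2)
      ≤ ∫ u in (0:ℝ)..t, exp (t / 2 * u) := by
        refine intervalIntegral.integral_mono_on ht.le
          ((by fun_prop : Continuous _).intervalIntegrable _ _)
          ((by fun_prop : Continuous _).intervalIntegrable _ _) ?_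
        intro u hu
        exact exp_le_exp.2 (by nlinarith [hu.1, hu.2])
    _ = 2 / t * (exp (t ^ 2 / 2) - 1) := by
        rw [intervalIntegral.integral_comp_mul_left exp (by positivity), integral_exp,
          smul_eq_mul, mul_zero, exp_zero, inv_div, show t / 2 * t = t ^ 2 / 2 by ring]
    _ ≤ 2 / t * exp (t ^ 2 / 2) := by gcongr; linarith

theorem integral_exp_sq_half_le {t : ℝ} (ht : 0 ≤ t) :
    ∫ u in (0:ℝ)..t, exp (u ^ 2 / 2) ≤ √2 * exp (t ^ 2 / 2) := by
  rcases le_or_gt t √2 with h | h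
  · exact (integral_exp_sq_half_le_mul ht).trans (by gcongr)
  · have ht0 : 0 < t := (sqrt_nonneg 2).trans_lt h
    refine (integral_exp_sq_half_le_two_div_mul ht0).trans ?_
    gcongr
    rw [div_le_iff₀ ht0]
    nlinarith [mul_self_sqrt (zero_le_two : (0:ℝ) ≤ 2), sqrt_nonneg 2]

theorem abs_integral_exp_sq_half_le (y : ℝ) :
    |∫ u in (0:ℝ)..y, exp (u ^ 2 / 2)| ≤ √2 * exp (y ^ 2 / 2) := by
  have key : ∀ t, 0 ≤ t → |∫ u in (0:ℝ)..t, exp (u ^ 2 / 2)| ≤ √2 * exp (t ^ 2 / 2) :=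
    fun t ht => by
      rw [abs_of_nonneg (intervalIntegral.integral_nonneg ht fun u _ => (exp_pos _).le)]
      exact integral_exp_sq_half_le ht
  rcases le_total 0 y with hy | hy
  · exact key y hy
  · have := key (-y) (neg_nonneg.2 hy)
    rwa [intervalIntegral_zero_neg_of_even (fun u => by rw [neg_sq]), abs_neg, neg_sq] at this

theorem imInt_sq_le (y : ℝ) : ImInt y ^ 2 ≤ 4 / π * exp (y ^ 2) := by
  have hI : ImInt y = √(2 / π) * ∫ u in (0:ℝ)..y, exp (u ^ 2 / 2) := by
    rw [ImInt, intervalIntegral.integral_const_mul]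
  have hsq : (∫ u in (0:ℝ)..y, exp (u ^ 2 / 2)) ^ 2 ≤ (√2 * exp (y ^ 2 / 2)) ^ 2 :=
    sq_le_sq' (abs_le.1 (abs_integral_exp_sq_half_le y)).1
      (abs_le.1 (abs_integral_exp_sq_half_le y)).2
  calc ImInt y ^ 2 = 2 / π * (∫ u in (0:ℝ)..y, exp (u ^ 2 / 2)) ^ 2 := by
        rw [hI, mul_pow, sq_sqrt (by positivity)]
    _ ≤ 2 / π * (√2 * exp (y ^ 2 / 2)) ^ 2 := by gcongr
    _ = 4 / π * exp (y ^ 2) := by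
        rw [mul_pow, sq_sqrt zero_le_two, sq, ← exp_add]; ring_nf

theorem one_add_imInt_sq_div_exp_le (y : ℝ) : (1 + ImInt y ^ 2) / exp (y ^ 2) ≤ 1 + 4 / π := by
  rw [div_le_iff₀ (exp_pos _), add_mul, one_mul]
  linarith [imInt_sq_le y, one_le_exp (sq_nonneg y)]

theorem stmt18 (x : ℝ) :
    Filter.limsup
      (fun c : ℝ => (((1 + ImInt (c * x) ^ 2) / Real.exp (c ^ 2 * x ^ 2) : ℝ) : EReal))
      atTop < ⊤ := by
  refine lt_of_le_of_lt (b := ((1 + 4 / π : ℝ) : EReal)) ?_ (EReal.coe_lt_top _)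
  refine limsup_le_of_le (by isBoundedDefault) (Eventually.of_forall fun c => ?_)
  rw [EReal.coe_le_coe_iff, ← mul_pow]
  exact one_add_imInt_sq_div_exp_le (c * x)
end
end
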